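/- Let V ⊆ ℂ² be the common zero locus of a family of polynomials in ℂ[X,Y]. If V is invariant under the diagonal ℂ*-action λ·(x,y) = (λx, λy) for all λ ∈ ℂ*, and V contains the line {(1,t) : t ∈ ℂ}, then V = ℂ². -/

import Mathlib

/-!
Scaling the line `{(1, t)}` sweeps out the open set `{x₀ ≠ 0}`, so every defining polynomial
vanishes on the torus `(ℂ*)²`; a polynomial vanishing on a product of infinite sets is zero.
-/

namespace MvPolynomial

theorem eq_zero_of_eval_eq_zero_of_ne_zero {R σ : Type*} [CommRing R] [IsDomain R] [Infinite R]
    {p : MvPolynomial σ R} (i : σ) (h : ∀ x : σ → R, x i ≠ 0 → eval x p = 0) : p = 0 :=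
  funext_set (fun _ => {0}ᶜ) (fun _ => (Set.finite_singleton 0).infinite_compl)
    fun x hx => by simpa using h x (hx i trivial)

end MvPolynomial

theorem mem_of_apply_zero_ne_zero_of_forall_mul_mem {K : Type*} [Field K] {V : Set (Fin 2 → K)}
    (hinv : ∀ c : K, c ≠ 0 → ∀ v ∈ V, (fun i => c * v i) ∈ V) (hline : ∀ t : K, ![1, t] ∈ V)
    {p : Fin 2 → K} (hp : p 0 ≠ 0) : p ∈ V := by
  convert hinv (p 0) hp _ (hline (p 1 / p 0)) using 1
  funext i
  fin_cases i <;> simp [mul_div_cancel₀ _ hp]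

/-- A Zariski-closed subset of `ℂ²` (the common zero locus of a family of polynomials)
which is invariant under the diagonal `ℂ*`-action and contains the line `{(1,t)}`
must be all of `ℂ²`. -/
theorem zero_locus_eq_univ_of_cstar_invariant_of_contains_line
    (S : Set (MvPolynomial (Fin 2) ℂ))
    (V : Set (Fin 2 → ℂ))
    (hV : V = {p : Fin 2 → ℂ | ∀ f ∈ S, MvPolynomial.eval p f = 0})
    (hinv : ∀ (lam : ℂ), lam ≠ 0 → ∀ v ∈ V, (fun i => lam * v i) ∈ V)
    (hline : ∀ t : ℂ, ![1, t] ∈ V) :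
    V = Set.univ := by
  have hopen : ∀ p : Fin 2 → ℂ, p 0 ≠ 0 → p ∈ V := fun p hp =>
    mem_of_apply_zero_ne_zero_of_forall_mul_mem hinv hline hp
  subst hV
  have hS : ∀ f ∈ S, f = 0 := fun f hf =>
    MvPolynomial.eq_zero_of_eval_eq_zero_of_ne_zero 0 fun x hx => hopen x hx f hf
  exact Set.eq_univ_of_forall fun p f hf => by simp [hS f hf]
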